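/- In two dimensions, let the multiplier m: ℝ² ∖ {0} → ℂ² be homogeneous of degree 0, smooth away from the origin, with m(−ξ) = conj(m(ξ)) and ξ·m(ξ) = 0 for ξ ≠ 0, and assume m is odd. Then m has the form m(ξ) = i ξ^⊥ |ξ|^{-1} ℓ(ξ), where ξ^⊥ = (−ξ₂, ξ₁) and ℓ is a scalar function which is real-valued, even, homogeneous of degree 0, and smooth on the unit circle. Consequently, the operator L = (−Δ)^{-1/2}(R₂T¹ − R₁T²) on 𝕋² is the Fourier multiplier with symbol L̂(ξ) = |ξ|^{-1} ℓ(ξ) (with L̂(0) = 0), and L is self-adjoint on L²(𝕋²). -/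

import Mathlib

open MeasureTheory Filter Topology

noncomputable section

/-- The unit cube in `ℝⁿ`, a fundamental domain for the torus `𝕋ⁿ = ℝⁿ/ℤⁿ`. -/
def cube (n : ℕ) : Set (Fin n → ℝ) := Set.univ.pi fun _ => Set.Ico (0 : ℝ) 1

/-- `ℤⁿ`-periodicity of a function on `ℝⁿ`, i.e. the function descends to `𝕋ⁿ`. -/
def ZPer {n : ℕ} {α : Type*} (f : (Fin n → ℝ) → α) : Prop :=
  ∀ (k : Fin n → ℤ) (x : Fin n → ℝ), f (x + fun i => (k i : ℝ)) = f x

/-- Fourier coefficient of a periodic function, w.r.t. the character `e^{2πi k·x}`. -/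
def fcoeff {n : ℕ} (f : (Fin n → ℝ) → ℂ) (k : Fin n → ℤ) : ℂ :=
  ∫ x in cube n, f x * Complex.exp (-(2 * Real.pi * Complex.I * ∑ i, (k i : ℝ) * x i))

/-- `u = T[θ]` where `T` is the Fourier multiplier operator with symbol `m`
(`m` acts on nonzero frequencies; the zero mode of `u` vanishes). -/
def IsDrift {n : ℕ} (m : (Fin n → ℝ) → Fin n → ℂ)
    (θ : (Fin n → ℝ) → ℝ) (u : (Fin n → ℝ) → Fin n → ℝ) : Prop :=
  ∀ (l : Fin n) (k : Fin n → ℤ),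
    fcoeff (fun x => (u x l : ℂ)) k =
      (if k = 0 then 0 else m (fun i => (k i : ℝ)) l) * fcoeff (fun x => (θ x : ℂ)) k

/-- Standing hypotheses on the symbol `m` of the constitutive operator `T`. -/
structure GoodSymbol (n : ℕ) (m : (Fin n → ℝ) → Fin n → ℂ) : Prop where
  homog : ∀ (c : ℝ) (ξ : Fin n → ℝ), 0 < c → ξ ≠ 0 → m (c • ξ) = m ξ
  conj_symm : ∀ ξ : Fin n → ℝ, ξ ≠ 0 → m (-ξ) = star (m ξ)
  div_free : ∀ ξ : Fin n → ℝ, ξ ≠ 0 → (∑ l, (ξ l : ℂ) * m ξ l) = 0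
  smooth : ContDiffOn ℝ (⊤ : ℕ∞) m {ξ | ξ ≠ 0}

/-- The multiplier is odd. -/
def OddSymbol {n : ℕ} (m : (Fin n → ℝ) → Fin n → ℂ) : Prop :=
  ∀ ξ : Fin n → ℝ, ξ ≠ 0 → m (-ξ) = -m ξ

/-- Weak solution of the active scalar equation on `I × 𝕋ⁿ`:
periodicity, the constitutive law `u = T[θ]` (for a.e. time in `I`), and the
distributional form of `∂ₜθ + div(θu) = 0` against smooth periodic test functions
compactly supported in time inside `I`. -/
def WeakSolutionOn {n : ℕ} (I : Set ℝ) (m : (Fin n → ℝ) → Fin n → ℂ)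
    (θ : ℝ → (Fin n → ℝ) → ℝ) (u : ℝ → (Fin n → ℝ) → Fin n → ℝ) : Prop :=
  (∀ t, ZPer (θ t)) ∧ (∀ t, ZPer (u t)) ∧
  (∀ᵐ t ∂(volume.restrict I), IsDrift m (θ t) (u t)) ∧
  ∀ φ : ℝ × (Fin n → ℝ) → ℝ, ContDiff ℝ (⊤ : ℕ∞) φ →
    (∀ (t : ℝ) (k : Fin n → ℤ) (x : Fin n → ℝ), φ (t, x + fun i => (k i : ℝ)) = φ (t, x)) →
    (∃ a b : ℝ, Set.Icc a b ⊆ I ∧ ∀ t x, t ∉ Set.Icc a b → φ (t, x) = 0) →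
    (∫ t : ℝ, ∫ x in cube n,
        (θ t x * fderiv ℝ φ (t, x) (1, 0)
          + θ t x * ∑ l, u t x l * fderiv ℝ φ (t, x) (0, Pi.single l 1))) = 0

/-- Global weak solution (on all of `ℝ × 𝕋ⁿ`). -/
def GlobalWeakSolution {n : ℕ} (m : (Fin n → ℝ) → Fin n → ℂ)
    (θ : ℝ → (Fin n → ℝ) → ℝ) (u : ℝ → (Fin n → ℝ) → Fin n → ℝ) : Prop :=
  WeakSolutionOn Set.univ m θ u

/-- Jointly Hölder continuous of exponent `α` in time and space. -/
def HolderCts {n : ℕ} (α : ℝ) (f : ℝ → (Fin n → ℝ) → ℝ) : Prop :=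
  ∃ C : ℝ, ∀ (t s : ℝ) (x y : Fin n → ℝ), |f t x - f s y| ≤ C * dist (t, x) (s, y) ^ α

/-- vanishing outside `I × 𝕋ⁿ`. -/
def SuppInTime {n : ℕ} {α : Type*} [Zero α] (I : Set ℝ) (f : ℝ → (Fin n → ℝ) → α) : Prop :=
  ∀ t ∉ I, ∀ x, f t x = 0

/-- compact time-support inside `I`. -/
def CptSuppInTime {n : ℕ} {α : Type*} [Zero α] (I : Set ℝ) (f : ℝ → (Fin n → ℝ) → α) : Prop :=
  ∃ a b : ℝ, Set.Icc a b ⊆ I ∧ ∀ t ∉ Set.Icc a b, ∀ x, f t x = 0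

/-- the Euclidean norm on `ℝ²`. -/
def enorm2 (ξ : Fin 2 → ℝ) : ℝ := Real.sqrt (ξ 0 ^ 2 + ξ 1 ^ 2)

/-- The symbol of `L = (-Δ)^{-1/2}(R₂T¹ - R₁T²)` on the integer frequency lattice
(with the character `e^{2πik·x}`; by degree-0 homogeneity `m(2πk) = m(k)`). -/
def Lsym (m : (Fin 2 → ℝ) → Fin 2 → ℂ) (k : Fin 2 → ℤ) : ℂ :=
  if k = 0 then 0 else
    (Complex.I * (k 1 : ℝ) * m (fun i => (k i : ℝ)) 0
        - Complex.I * (k 0 : ℝ) * m (fun i => (k i : ℝ)) 1) /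
      (2 * Real.pi * (((k 0 : ℝ)) ^ 2 + ((k 1 : ℝ)) ^ 2))

/-- `g = L f` in the Fourier multiplier sense. -/
def IsLOf (m : (Fin 2 → ℝ) → Fin 2 → ℂ) (f g : (Fin 2 → ℝ) → ℝ) : Prop :=
  ∀ k : Fin 2 → ℤ,
    fcoeff (fun x => (g x : ℂ)) k = Lsym m k * fcoeff (fun x => (f x : ℂ)) k

/-! Oddness and conjugate symmetry make `m` purely imaginary, and the divergence-free condition
makes `Im m(ξ)` orthogonal to `ξ`. In two dimensions `Im m(ξ)` is therefore a multiple
`ℓ(ξ) ξ^⊥ / |ξ|` of the rotated frequency, and `ℓ` inherits parity, homogeneity and smoothness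
from `m`. The symbol of `L` is then real, and a Fourier multiplier with real symbol is
self-adjoint by Parseval's identity on the torus. -/

open scoped ComplexConjugate

lemma sq_add_sq_pos_of_ne_zero {ξ : Fin 2 → ℝ} (h : ξ ≠ 0) : 0 < ξ 0 ^ 2 + ξ 1 ^ 2 := by
  by_contra hle
  apply h
  ext i
  fin_cases i <;> simp <;> nlinarith [sq_nonneg (ξ 0), sq_nonneg (ξ 1)]

lemma enorm2_pos {ξ : Fin 2 → ℝ} (h : ξ ≠ 0) : 0 < enorm2 ξ :=
  Real.sqrt_pos.mpr (sq_add_sq_pos_of_ne_zero h)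

lemma sq_enorm2 (ξ : Fin 2 → ℝ) : enorm2 ξ ^ 2 = ξ 0 ^ 2 + ξ 1 ^ 2 :=
  Real.sq_sqrt (by positivity)

lemma enorm2_neg (ξ : Fin 2 → ℝ) : enorm2 (-ξ) = enorm2 ξ := by
  simp [enorm2]

lemma enorm2_smul {c : ℝ} (hc : 0 < c) (ξ : Fin 2 → ℝ) : enorm2 (c • ξ) = c * enorm2 ξ := by
  simp only [enorm2, Pi.smul_apply, smul_eq_mul, mul_pow, ← mul_add]
  rw [Real.sqrt_mul (by positivity), Real.sqrt_sq hc.le]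

lemma contDiffOn_enorm2 : ContDiffOn ℝ (⊤ : ℕ∞) enorm2 {ξ | ξ ≠ 0} :=
  ContDiffOn.sqrt (by fun_prop) fun _ hξ => (sq_add_sq_pos_of_ne_zero hξ).ne'

section Symbol

variable {n : ℕ} {m : (Fin n → ℝ) → Fin n → ℂ}

lemma GoodSymbol.star_eq_neg (hm : GoodSymbol n m) (hodd : OddSymbol m) {ξ : Fin n → ℝ}
    (hξ : ξ ≠ 0) : star (m ξ) = -m ξ := by
  rw [← hm.conj_symm ξ hξ, hodd ξ hξ]

lemma GoodSymbol.re_eq_zero (hm : GoodSymbol n m) (hodd : OddSymbol m) {ξ : Fin n → ℝ}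
    (hξ : ξ ≠ 0) (l : Fin n) : (m ξ l).re = 0 := by
  have h := congrArg Complex.re (congrFun (hm.star_eq_neg hodd hξ) l)
  simp only [Pi.star_apply, Complex.star_def, Complex.conj_re, Pi.neg_apply, Complex.neg_re] at h
  linarith

lemma GoodSymbol.eq_I_mul_im (hm : GoodSymbol n m) (hodd : OddSymbol m) {ξ : Fin n → ℝ}
    (hξ : ξ ≠ 0) (l : Fin n) : m ξ l = Complex.I * ((m ξ l).im : ℂ) := by
  apply Complex.ext <;> simp [hm.re_eq_zero hodd hξ l]

lemma GoodSymbol.sum_mul_im_eq_zero (hm : GoodSymbol n m) {ξ : Fin n → ℝ} (hξ : ξ ≠ 0) :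
    ∑ l, ξ l * (m ξ l).im = 0 := by
  simpa [Complex.im_sum, Complex.mul_im] using congrArg Complex.im (hm.div_free ξ hξ)

end Symbol

section TwoDim

variable {m : (Fin 2 → ℝ) → Fin 2 → ℂ}

/-- The scalar `ℓ` of the paper: the component of `Im m(ξ)` along `ξ^⊥ / |ξ|`,
where `ξ^⊥ = (-ξ₁, ξ₀)`. -/
def perpComponent (m : (Fin 2 → ℝ) → Fin 2 → ℂ) (ξ : Fin 2 → ℝ) : ℝ :=
  (-(ξ 1) * (m ξ 0).im + ξ 0 * (m ξ 1).im) / enorm2 ξ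

lemma perpComponent_neg (hodd : OddSymbol m) {ξ : Fin 2 → ℝ} (hξ : ξ ≠ 0) :
    perpComponent m (-ξ) = perpComponent m ξ := by
  simp only [perpComponent, hodd ξ hξ, enorm2_neg, Pi.neg_apply, Complex.neg_im]
  ring

lemma perpComponent_smul (hm : GoodSymbol 2 m) {c : ℝ} {ξ : Fin 2 → ℝ} (hc : 0 < c)
    (hξ : ξ ≠ 0) : perpComponent m (c • ξ) = perpComponent m ξ := by
  simp only [perpComponent, hm.homog c ξ hc hξ, enorm2_smul hc, Pi.smul_apply, smul_eq_mul]
  field_simp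

lemma contDiffOn_perpComponent (hm : GoodSymbol 2 m) :
    ContDiffOn ℝ (⊤ : ℕ∞) (perpComponent m) {ξ | ξ ≠ 0} := by
  have him : ∀ l, ContDiffOn ℝ (⊤ : ℕ∞) (fun ξ => (m ξ l).im) {ξ | ξ ≠ 0} := fun l =>
    Complex.imCLM.contDiff.comp_contDiffOn
      ((ContinuousLinearMap.proj (R := ℝ) (φ := fun _ : Fin 2 => ℂ) l).contDiff.comp_contDiffOn
        hm.smooth)
  refine ContDiffOn.div ?_ contDiffOn_enorm2 fun ξ hξ => (enorm2_pos hξ).ne'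
  exact ((contDiff_apply ℝ ℝ 1).neg.contDiffOn.mul (him 0)).add
    ((contDiff_apply ℝ ℝ 0).contDiffOn.mul (him 1))

lemma GoodSymbol.eq_I_mul_perp (hm : GoodSymbol 2 m) (hodd : OddSymbol m) {ξ : Fin 2 → ℝ}
    (hξ : ξ ≠ 0) :
    m ξ 0 = Complex.I * ((-(ξ 1) * perpComponent m ξ / enorm2 ξ : ℝ) : ℂ) ∧
    m ξ 1 = Complex.I * ((ξ 0 * perpComponent m ξ / enorm2 ξ : ℝ) : ℂ) := by
  have hN := (enorm2_pos hξ).ne'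
  have hdiv := hm.sum_mul_im_eq_zero hξ
  rw [Fin.sum_univ_two] at hdiv
  have hsq := sq_enorm2 ξ
  have h0 : -(ξ 1) * perpComponent m ξ / enorm2 ξ = (m ξ 0).im := by
    rw [perpComponent]
    field_simp
    linear_combination (-(m ξ 0).im) * hsq - ξ 0 * hdiv
  have h1 : ξ 0 * perpComponent m ξ / enorm2 ξ = (m ξ 1).im := by
    rw [perpComponent]
    field_simp
    linear_combination (-(m ξ 1).im) * hsq - ξ 1 * hdiv
  rw [h0, h1]
  exact ⟨hm.eq_I_mul_im hodd hξ 0, hm.eq_I_mul_im hodd hξ 1⟩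

lemma GoodSymbol.symbol_L_eq (hm : GoodSymbol 2 m) (hodd : OddSymbol m) {ξ : Fin 2 → ℝ}
    (hξ : ξ ≠ 0) :
    (Complex.I * (ξ 1) * m ξ 0 - Complex.I * (ξ 0) * m ξ 1) / (((enorm2 ξ) ^ 2 : ℝ) : ℂ)
      = ((perpComponent m ξ / enorm2 ξ : ℝ) : ℂ) := by
  obtain ⟨h0, h1⟩ := hm.eq_I_mul_perp hodd hξ
  have hN : (enorm2 ξ : ℂ) ≠ 0 := by exact_mod_cast (enorm2_pos hξ).ne'
  have hsq : (enorm2 ξ : ℂ) ^ 2 = (ξ 0 : ℂ) ^ 2 + (ξ 1 : ℂ) ^ 2 := by exact_mod_cast sq_enorm2 ξ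
  rw [h0, h1]
  push_cast
  field_simp
  linear_combination
    (-(perpComponent m ξ : ℂ) * (ξ 0 ^ 2 + ξ 1 ^ 2)) * Complex.I_sq - (perpComponent m ξ : ℂ) * hsq

lemma GoodSymbol.conj_Lsym (hm : GoodSymbol 2 m) (hodd : OddSymbol m) (k : Fin 2 → ℤ) :
    conj (Lsym m k) = Lsym m k := by
  unfold Lsym
  split_ifs with hk
  · simp
  have hξ : (fun i => (k i : ℝ)) ≠ 0 := fun h =>
    hk (funext fun i => by simpa using congrFun h i)
  have hstar l := congrFun (hm.star_eq_neg hodd hξ) l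
  simp only [Pi.star_apply, Complex.star_def, Pi.neg_apply] at hstar
  simp only [map_div₀, map_sub, map_mul, hstar, Complex.conj_I, Complex.conj_ofReal, map_ofNat,
    map_add, map_pow]
  ring

end TwoDim

section TorusParseval

/- Mathlib's Parseval identity on `UnitAddTorus` is stated for the Haar probability measure on
`UnitAddCircle`, a file-local instance there; the global `volume` on `AddCircle 1` is
`ENNReal.ofReal 1 • haarAddCircle`, equal to it but not definitionally. -/
attribute [local instance] instMeasureSpaceUnitAddCircle
  instIsProbabilityMeasureUnitAddCircleVolume

variable {n : ℕ}

namespace UnitAddTorus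

def mk : C(Fin n → ℝ, UnitAddTorus (Fin n)) :=
  ⟨fun x i => (x i : UnitAddCircle), by fun_prop⟩

lemma isQuotientMap_mk : Topology.IsQuotientMap (mk (n := n)) :=
  (IsOpenQuotientMap.piMap fun _ => QuotientAddGroup.isOpenQuotientMap_mk).isQuotientMap

lemma exists_eq_add_of_mk_eq {x y : Fin n → ℝ} (h : mk x = mk y) :
    ∃ k : Fin n → ℤ, x = y + fun i => (k i : ℝ) := by
  choose k hk using fun i =>
    AddSubgroup.mem_zmultiples_iff.mp (QuotientAddGroup.eq.mp (congrFun h i).symm)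
  refine ⟨k, funext fun i => ?_⟩
  simp only [zsmul_eq_mul, mul_one] at hk
  simp only [Pi.add_apply, hk i]
  ring

lemma factorsThrough_mk {α : Type*} {F : (Fin n → ℝ) → α} (hF : ZPer F) :
    Function.FactorsThrough F (mk (n := n)) := fun x y h => by
  obtain ⟨k, rfl⟩ := exists_eq_add_of_mk_eq h
  exact hF k y

def liftPeriodic {Z : Type*} [TopologicalSpace Z] {F : (Fin n → ℝ) → Z} (hFc : Continuous F)
    (hF : ZPer F) : C(UnitAddTorus (Fin n), Z) :=
  isQuotientMap_mk.lift ⟨F, hFc⟩ (factorsThrough_mk hF)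

@[simp]
lemma liftPeriodic_mk {Z : Type*} [TopologicalSpace Z] {F : (Fin n → ℝ) → Z}
    (hFc : Continuous F) (hF : ZPer F) (x : Fin n → ℝ) : liftPeriodic hFc hF (mk x) = F x :=
  DFunLike.congr_fun (isQuotientMap_mk.lift_comp (⟨F, hFc⟩ : C(Fin n → ℝ, Z))
    (factorsThrough_mk hF)) x

lemma integral_eq_setIntegral_cube {E : Type*} [NormedAddCommGroup E] [NormedSpace ℝ E]
    (G : UnitAddTorus (Fin n) → E) :
    ∫ z, G z = ∫ x in cube n, G (mk x) := by
  rw [integral_preimage G 0]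
  refine setIntegral_congr_set ?_
  have hIoc : {x : Fin n → ℝ | ∀ i, x i ∈ Set.Ioc ((0 : Fin n → ℝ) i) ((0 : Fin n → ℝ) i + 1)}
      = Set.univ.pi fun _ => Set.Ioc (0 : ℝ) 1 := by ext; simp
  rw [hIoc, cube]
  exact (Measure.univ_pi_Ioc_ae_eq_Icc (f := fun _ => (0:ℝ)) (g := fun _ => 1)).trans
    Measure.univ_pi_Ico_ae_eq_Icc.symm

lemma mFourier_neg_mk (k : Fin n → ℤ) (x : Fin n → ℝ) :
    mFourier (-k) (mk x) = Complex.exp (-(2 * Real.pi * Complex.I * ∑ i, (k i : ℝ) * x i)) := by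
  simp only [mFourier, mk, ContinuousMap.coe_mk, Pi.neg_apply, fourier_coe_apply]
  rw [← Complex.exp_sum]
  congr 1
  push_cast
  rw [Finset.mul_sum, ← Finset.sum_neg_distrib]
  refine Finset.sum_congr rfl fun i _ => ?_
  ring

lemma mFourierCoeff_liftPeriodic {F : (Fin n → ℝ) → ℂ} (hFc : Continuous F) (hF : ZPer F)
    (k : Fin n → ℤ) : mFourierCoeff (liftPeriodic hFc hF) k = fcoeff F k := by
  rw [mFourierCoeff, integral_eq_setIntegral_cube, fcoeff]
  simp only [liftPeriodic_mk, mFourier_neg_mk, smul_eq_mul, mul_comm]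

end UnitAddTorus

open UnitAddTorus

theorem hasSum_conj_fcoeff_mul_fcoeff {F G : (Fin n → ℝ) → ℂ} (hFc : Continuous F) (hF : ZPer F)
    (hGc : Continuous G) (hG : ZPer G) :
    HasSum (fun k => conj (fcoeff F k) * fcoeff G k) (∫ x in cube n, conj (F x) * G x) := by
  set F' := liftPeriodic hFc hF
  set G' := liftPeriodic hGc hG
  have h := hasSum_prod_mFourierCoeff (F'.toLp 2 volume ℂ) (G'.toLp 2 volume ℂ)
  simp only [F', G', mFourierCoeff_toLp, mFourierCoeff_liftPeriodic] at h
  convert h using 1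
  have hL2 : (fun t => conj (F' t) * G' t) =ᵐ[volume]
      fun t => conj (F'.toLp 2 volume ℂ t) * G'.toLp 2 volume ℂ t := by
    filter_upwards [ContinuousMap.coeFn_toLp (p := 2) (𝕜 := ℂ) volume F',
      ContinuousMap.coeFn_toLp (p := 2) (𝕜 := ℂ) volume G'] with t hFt hGt
    rw [hFt, hGt]
  rw [← integral_congr_ae hL2, integral_eq_setIntegral_cube]
  simp only [F', G', liftPeriodic_mk]

end TorusParseval

section RealSymbol

variable {n : ℕ}

def IsFourierMultiplierOf (σ : (Fin n → ℤ) → ℂ) (f g : (Fin n → ℝ) → ℝ) : Prop :=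
  ∀ k, fcoeff (fun x => (g x : ℂ)) k = σ k * fcoeff (fun x => (f x : ℂ)) k

lemma ZPer.comp {α β : Type*} {f : (Fin n → ℝ) → α} (hf : ZPer f) (g : α → β) :
    ZPer fun x => g (f x) := fun k x => congrArg g (hf k x)

lemma hasSum_conj_fcoeff_mul_fcoeff_ofReal {u v : (Fin n → ℝ) → ℝ} (hu : Continuous u)
    (hup : ZPer u) (hv : Continuous v) (hvp : ZPer v) :
    HasSum (fun k => conj (fcoeff (fun x => (u x : ℂ)) k) * fcoeff (fun x => (v x : ℂ)) k)
      ((∫ x in cube n, u x * v x : ℝ) : ℂ) := by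
  convert hasSum_conj_fcoeff_mul_fcoeff (F := fun x => (u x : ℂ)) (G := fun x => (v x : ℂ))
    (by fun_prop) (hup.comp _) (by fun_prop) (hvp.comp _) using 1
  rw [← integral_complex_ofReal]
  simp only [Complex.ofReal_mul, Complex.conj_ofReal]

theorem setIntegral_cube_mul_eq_of_real_symbol {σ : (Fin n → ℤ) → ℂ}
    (hσ : ∀ k, conj (σ k) = σ k) {f g Lf Lg : (Fin n → ℝ) → ℝ}
    (hf : Continuous f) (hg : Continuous g) (hLf : Continuous Lf) (hLg : Continuous Lg)
    (hfp : ZPer f) (hgp : ZPer g) (hLfp : ZPer Lf) (hLgp : ZPer Lg)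
    (hLff : IsFourierMultiplierOf σ f Lf) (hLgg : IsFourierMultiplierOf σ g Lg) :
    ∫ x in cube n, f x * Lg x = ∫ x in cube n, Lf x * g x := by
  unfold IsFourierMultiplierOf at hLff hLgg
  have hfLg := hasSum_conj_fcoeff_mul_fcoeff_ofReal hf hfp hLg hLgp
  -- conjugating Parseval's series for `∫ g * Lf` gives the one for `∫ f * Lg`, as `σ` is real
  have hgLf := Complex.hasSum_conj'.mpr (hasSum_conj_fcoeff_mul_fcoeff_ofReal hg hgp hLf hLfp)
  simp only [hLff, hLgg, map_mul, Complex.conj_conj, hσ, Complex.conj_ofReal] at hfLg hgLf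
  have := hfLg.unique (hgLf.congr_fun fun k => by ring)
  simp only [mul_comm (Lf _)]
  exact_mod_cast this

end RealSymbol

/-- an odd, degree-0 homogeneous, divergence-free multiplier in 2D has
the form `m(ξ) = i ξ^⊥ |ξ|⁻¹ ℓ(ξ)` with `ℓ` real, even, homogeneous of degree 0 and
smooth away from the origin; consequently the symbol of `L = (-Δ)^{-1/2}(R₂T¹ - R₁T²)`
is `|ξ|⁻¹ ℓ(ξ)`, and `L` is self-adjoint on `L²(𝕋²)`. -/
theorem odd_symbol_structure_and_L_selfadjoint
    (m : (Fin 2 → ℝ) → Fin 2 → ℂ) (hm : GoodSymbol 2 m) (hodd : OddSymbol m) :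
    (∃ ℓ : (Fin 2 → ℝ) → ℝ,
      (∀ ξ : Fin 2 → ℝ, ξ ≠ 0 → ℓ (-ξ) = ℓ ξ) ∧
      (∀ (c : ℝ) (ξ : Fin 2 → ℝ), 0 < c → ξ ≠ 0 → ℓ (c • ξ) = ℓ ξ) ∧
      ContDiffOn ℝ (⊤ : ℕ∞) ℓ {ξ | ξ ≠ 0} ∧
      (∀ ξ : Fin 2 → ℝ, ξ ≠ 0 →
        m ξ 0 = Complex.I * ((-(ξ 1) * ℓ ξ / enorm2 ξ : ℝ) : ℂ) ∧
        m ξ 1 = Complex.I * ((ξ 0 * ℓ ξ / enorm2 ξ : ℝ) : ℂ)) ∧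
      -- the symbol of L is |ξ|⁻¹ ℓ(ξ)
      (∀ ξ : Fin 2 → ℝ, ξ ≠ 0 →
        (Complex.I * (ξ 1) * m ξ 0 - Complex.I * (ξ 0) * m ξ 1) / (((enorm2 ξ) ^ 2 : ℝ) : ℂ)
          = ((ℓ ξ / enorm2 ξ : ℝ) : ℂ))) ∧
    -- L is self-adjoint on L²(𝕋²)
    (∀ f g Lf Lg : (Fin 2 → ℝ) → ℝ,
      Continuous f → Continuous g → Continuous Lf → Continuous Lg →
      ZPer f → ZPer g → ZPer Lf → ZPer Lg →
      IsLOf m f Lf → IsLOf m g Lg →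
      (∫ x in cube 2, f x * Lg x) = ∫ x in cube 2, Lf x * g x) :=
  ⟨⟨perpComponent m, fun _ hξ => perpComponent_neg hodd hξ,
      fun _ _ hc hξ => perpComponent_smul hm hc hξ, contDiffOn_perpComponent hm,
      fun _ hξ => hm.eq_I_mul_perp hodd hξ, fun _ hξ => hm.symbol_L_eq hodd hξ⟩,
    fun _ _ _ _ hf hg hLf hLg hfp hgp hLfp hLgp hLff hLgg =>
      setIntegral_cube_mul_eq_of_real_symbol (hm.conj_Lsym hodd) hf hg hLf hLg hfp hgp hLfp hLgp
        hLff hLgg⟩
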